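/- Let n ≥ 2 and let ψ, F : [0, r₀] → ℝ be continuous with ψ(r) = O(r³) and F(r) = O(r³) as r → 0⁺. Define Y(r) = r^{−(n−1)/2} exp(½∫₀^r ψ(ρ)dρ) · ∫₀^r ρ^{(n−1)/2} exp(−½∫₀^ρ ψ(χ)dχ) F(ρ) dρ for r ∈ (0, r₀]. Then Y extends continuously to 0 with Y(0)=0, Y is the unique bounded-at-0 solution of Y′(r) = (½ψ(r) − (n−1)/(2r)) Y(r) + F(r), and Y(r) = O(r⁴) as r → 0⁺. -/

import Mathlib

/-!
Put `a = (n - 1) / 2` and `μ(r) = r ^ a * exp (-½ ∫₀^r ψ)`. Then `μ' = (a / r - ψ / 2) μ`, so the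
equation is `(μ Y)' = μ F` and the formula is `Y = μ⁻¹ ∫₀^r μ F`. As `∫₀^r ψ` is bounded,
`μ` is comparable to `r ^ a`; hence `|F| ≤ C r³` gives `|∫₀^r μ F| ≲ r ^ (a + 4)` and `|Y| ≲ r⁴`.
If `Z` is a second solution bounded near `0`, then `μ (Z - Y)` is constant and, because `a > 0`,
tends to `0` at `0`, so `Z = Y`.
-/

open Set Filter Topology MeasureTheory intervalIntegral

lemma hasDerivWithinAt_integral_of_continuousOn {f : ℝ → ℝ} {a b r : ℝ}
    (hf : ContinuousOn f (Icc a b)) (hr : r ∈ Icc a b) :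
    HasDerivWithinAt (fun u => ∫ x in a..u, f x) (f r) (Icc a b) r := by
  have : Fact (r ∈ Icc a b) := ⟨hr⟩
  have hint : IntervalIntegrable f volume a r :=
    (hf.mono (uIcc_of_le hr.1 ▸ Icc_subset_Icc_right hr.2)).intervalIntegrable
  exact integral_hasDerivWithinAt_right hint
    (hf.stronglyMeasurableAtFilter_nhdsWithin measurableSet_Icc r) (hf r hr)

lemma continuousOn_integral_of_continuousOn {f : ℝ → ℝ} {a b : ℝ}
    (hf : ContinuousOn f (Icc a b)) : ContinuousOn (fun u => ∫ x in a..u, f x) (Icc a b) := by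
  rcases le_total a b with h | h
  · rw [← uIcc_of_le h] at hf ⊢
    exact continuousOn_primitive_interval (hf.integrableOn_compact isCompact_uIcc)
  · exact (subsingleton_Icc_of_ge h).continuousOn _

lemma abs_integral_le_of_abs_le_rpow {f : ℝ → ℝ} {r q c : ℝ} (hr : 0 ≤ r) (hq : -1 < q)
    (hf : IntervalIntegrable f volume 0 r) (h : ∀ ρ ∈ Ioo 0 r, |f ρ| ≤ c * ρ ^ q) :
    |∫ ρ in (0:ℝ)..r, f ρ| ≤ c * r ^ (q + 1) / (q + 1) := by
  have hq' : q + 1 ≠ 0 := by linarith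
  calc |∫ ρ in (0:ℝ)..r, f ρ| ≤ ∫ ρ in (0:ℝ)..r, |f ρ| := abs_integral_le_integral_abs hr
    _ ≤ ∫ ρ in (0:ℝ)..r, c * ρ ^ q :=
      integral_mono_on_of_le_Ioo hr hf.abs ((intervalIntegrable_rpow' hq).const_mul c) h
    _ = c * r ^ (q + 1) / (q + 1) := by
      rw [intervalIntegral.integral_const_mul, integral_rpow (Or.inl hq), Real.zero_rpow hq']
      ring

lemma Convex.eq_of_hasDerivWithinAt_zero {E : Type*} [NormedAddCommGroup E] [NormedSpace ℝ E]
    {f : ℝ → E} {s : Set ℝ} (hs : Convex ℝ s) (hf : ∀ x ∈ s, HasDerivWithinAt f 0 s x)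
    {x y : ℝ} (hx : x ∈ s) (hy : y ∈ s) : f x = f y := by
  have h := hs.norm_image_sub_le_of_norm_hasDerivWithin_le hf (fun _ _ => norm_zero.le) hx hy
  rw [zero_mul, norm_le_zero_iff, sub_eq_zero] at h
  exact h.symm

lemma tendsto_nhdsGT_zero_of_abs_le_mul_rpow {f : ℝ → ℝ} {r₀ C k : ℝ} (hr₀ : 0 < r₀)
    (hk : 0 < k) (h : ∀ r ∈ Ioc 0 r₀, |f r| ≤ C * r ^ k) :
    Tendsto f (𝓝[>] 0) (𝓝 0) := by
  have hlim : Tendsto (fun r : ℝ => C * r ^ k) (𝓝[>] 0) (𝓝 0) := by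
    simpa [Real.zero_rpow hk.ne'] using
      ((Real.continuousAt_rpow_const 0 k (Or.inr hk.le)).tendsto.const_mul C).mono_left
        nhdsWithin_le_nhds
  refine squeeze_zero_norm' ?_ hlim
  filter_upwards [Ioc_mem_nhdsGT hr₀] with r hr using h r hr

section LinearODE

variable {μ G Z : ℝ → ℝ} {s : Set ℝ} {r k f : ℝ}

lemma HasDerivWithinAt.mul_integratingFactor (hμ : HasDerivWithinAt μ (k * μ r) s r)
    (hZ : HasDerivWithinAt Z (-k * Z r + f) s r) :
    HasDerivWithinAt (fun u => μ u * Z u) (μ r * f) s r :=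
  (hμ.fun_mul hZ).congr_deriv (by ring)

lemma HasDerivWithinAt.div_integratingFactor (hμ : HasDerivWithinAt μ (k * μ r) s r)
    (hμr : μ r ≠ 0) (hG : HasDerivWithinAt G (μ r * f) s r) :
    HasDerivWithinAt (fun u => G u / μ u) (-k * (G r / μ r) + f) s r :=
  (hG.fun_div hμ hμr).congr_deriv (by field_simp; ring)

end LinearODE

noncomputable def integratingFactor (a : ℝ) (ψ : ℝ → ℝ) (r : ℝ) : ℝ :=
  r ^ a * Real.exp (-(1 / 2) * ∫ ρ in (0:ℝ)..r, ψ ρ)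

noncomputable def integralSolution (a : ℝ) (ψ F : ℝ → ℝ) (r : ℝ) : ℝ :=
  (∫ ρ in (0:ℝ)..r, integratingFactor a ψ ρ * F ρ) / integratingFactor a ψ r

section IntegratingFactor

variable {a r r₀ : ℝ} {ψ F : ℝ → ℝ}

lemma integratingFactor_pos (hr : 0 < r) : 0 < integratingFactor a ψ r :=
  mul_pos (Real.rpow_pos_of_pos hr a) (Real.exp_pos _)

lemma inv_integratingFactor (hr : 0 ≤ r) :
    (integratingFactor a ψ r)⁻¹ = r ^ (-a) * Real.exp (1 / 2 * ∫ ρ in (0:ℝ)..r, ψ ρ) := by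
  rw [integratingFactor, mul_inv, Real.rpow_neg hr, ← Real.exp_neg, neg_mul, neg_neg]

lemma continuousOn_integratingFactor (ha : 0 ≤ a) (hψ : ContinuousOn ψ (Icc 0 r₀)) :
    ContinuousOn (integratingFactor a ψ) (Icc 0 r₀) :=
  (Real.continuous_rpow_const ha).continuousOn.mul
    ((continuousOn_const.mul (continuousOn_integral_of_continuousOn hψ)).rexp)

lemma hasDerivWithinAt_integratingFactor (hψ : ContinuousOn ψ (Icc 0 r₀)) (hr : r ∈ Ioc 0 r₀) :
    HasDerivWithinAt (integratingFactor a ψ) ((a / r - ψ r / 2) * integratingFactor a ψ r)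
      (Ioc 0 r₀) r := by
  have hP := (hasDerivWithinAt_integral_of_continuousOn hψ (Ioc_subset_Icc_self hr)).mono
    Ioc_subset_Icc_self
  have hpow := (Real.hasDerivAt_rpow_const (p := a) (Or.inl hr.1.ne')).hasDerivWithinAt
    (s := Ioc 0 r₀)
  refine (hpow.fun_mul (hP.const_mul (-(1 / 2))).exp).congr_deriv ?_
  rw [integratingFactor, Real.rpow_sub_one hr.1.ne']
  field_simp
  ring

lemma exists_integratingFactor_le_and_rpow_le (hψ : ContinuousOn ψ (Icc 0 r₀)) :
    ∃ K > 0, ∀ r ∈ Icc 0 r₀,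
      integratingFactor a ψ r ≤ K * r ^ a ∧ r ^ a ≤ K * integratingFactor a ψ r := by
  obtain ⟨M, hM⟩ :=
    isCompact_Icc.exists_bound_of_continuousOn (continuousOn_integral_of_continuousOn hψ)
  refine ⟨Real.exp M, Real.exp_pos M, fun r hr => ?_⟩
  obtain ⟨hle, hge⟩ := abs_le.1 (hM r hr)
  have hra : 0 ≤ r ^ a := Real.rpow_nonneg hr.1 a
  constructor
  · rw [integratingFactor, mul_comm (Real.exp M)]
    gcongr
    linarith
  · rw [integratingFactor, ← mul_assoc, mul_comm (Real.exp M), mul_assoc, ← Real.exp_add]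
    refine le_mul_of_one_le_right hra (Real.one_le_exp ?_)
    linarith

end IntegratingFactor

section IntegralSolution

variable {a r₀ : ℝ} {ψ F : ℝ → ℝ}

lemma hasDerivWithinAt_integralSolution (ha : 0 ≤ a) (hψ : ContinuousOn ψ (Icc 0 r₀))
    (hF : ContinuousOn F (Icc 0 r₀)) {r : ℝ} (hr : r ∈ Ioc 0 r₀) :
    HasDerivWithinAt (integralSolution a ψ F)
      ((ψ r / 2 - a / r) * integralSolution a ψ F r + F r) (Ioc 0 r₀) r := by
  have hG := (hasDerivWithinAt_integral_of_continuousOn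
    ((continuousOn_integratingFactor ha hψ).mul hF) (Ioc_subset_Icc_self hr)).mono
      Ioc_subset_Icc_self
  exact ((hasDerivWithinAt_integratingFactor hψ hr).div_integratingFactor
    (integratingFactor_pos hr.1).ne' hG).congr_deriv (by rw [neg_sub]; rfl)

lemma abs_integralSolution_le (ha : 0 ≤ a) (hψ : ContinuousOn ψ (Icc 0 r₀))
    (hF : ContinuousOn F (Icc 0 r₀)) {CF : ℝ} (hFle : ∀ r ∈ Ioc 0 r₀, |F r| ≤ CF * r ^ 3) :
    ∃ C, ∀ r ∈ Ioc 0 r₀, |integralSolution a ψ F r| ≤ C * r ^ 4 := by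
  obtain ⟨K, hK0, hK⟩ := exists_integratingFactor_le_and_rpow_le (a := a) hψ
  refine ⟨K * CF / (a + 4) * K, fun r hr => ?_⟩
  have hμ := integratingFactor_pos (a := a) (ψ := ψ) hr.1
  have hCF : 0 ≤ CF := nonneg_of_mul_nonneg_left ((abs_nonneg _).trans (hFle r hr)) (pow_pos hr.1 3)
  have hμF : IntervalIntegrable (fun ρ => integratingFactor a ψ ρ * F ρ) volume 0 r :=
    (((continuousOn_integratingFactor ha hψ).mul hF).mono
      (Icc_subset_Icc_right hr.2)).intervalIntegrable_of_Icc hr.1.le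
  have hG := abs_integral_le_of_abs_le_rpow hr.1.le (by linarith : -1 < a + 3) hμF
    (c := K * CF) fun ρ hρ => by
      have hρ' : ρ ∈ Ioc 0 r₀ := ⟨hρ.1, hρ.2.le.trans hr.2⟩
      rw [abs_mul, abs_of_pos (integratingFactor_pos hρ.1), Real.rpow_add hρ.1, Real.rpow_ofNat,
        mul_mul_mul_comm]
      exact mul_le_mul (hK ρ (Ioc_subset_Icc_self hρ')).1 (hFle ρ hρ') (abs_nonneg _)
        (mul_nonneg hK0.le (Real.rpow_nonneg hρ.1.le a))
  rw [show a + 3 + 1 = a + 4 by ring, Real.rpow_add hr.1, Real.rpow_ofNat] at hG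
  calc |integralSolution a ψ F r|
      = |∫ ρ in (0:ℝ)..r, integratingFactor a ψ ρ * F ρ| / integratingFactor a ψ r := by
        rw [integralSolution, abs_div, abs_of_pos hμ]
    _ ≤ K * CF / (a + 4) * r ^ 4 * r ^ a / integratingFactor a ψ r := by
        gcongr
        exact hG.trans_eq (by ring)
    _ ≤ K * CF / (a + 4) * r ^ 4 * (K * integratingFactor a ψ r) / integratingFactor a ψ r := by
        gcongr
        exact (hK r (Ioc_subset_Icc_self hr)).2
    _ = K * CF / (a + 4) * K * r ^ 4 := by
        field_simp

end IntegralSolution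

section Uniqueness

variable {a r₀ : ℝ} {ψ F : ℝ → ℝ}

lemma tendsto_integratingFactor_nhdsGT_zero (ha : 0 < a) (hr₀ : 0 < r₀)
    (hψ : ContinuousOn ψ (Icc 0 r₀)) : Tendsto (integratingFactor a ψ) (𝓝[>] 0) (𝓝 0) := by
  obtain ⟨K, -, hK⟩ := exists_integratingFactor_le_and_rpow_le (a := a) hψ
  refine tendsto_nhdsGT_zero_of_abs_le_mul_rpow (C := K) hr₀ ha fun r hr => ?_
  rw [abs_of_pos (integratingFactor_pos hr.1)]
  exact (hK r (Ioc_subset_Icc_self hr)).1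

lemma eqOn_of_isBoundedUnder_of_hasDerivWithinAt (ha : 0 < a) (hr₀ : 0 < r₀)
    (hψ : ContinuousOn ψ (Icc 0 r₀)) {Z₁ Z₂ : ℝ → ℝ}
    (hZ₁ : ∀ r ∈ Ioc 0 r₀, HasDerivWithinAt Z₁ ((ψ r / 2 - a / r) * Z₁ r + F r) (Ioc 0 r₀) r)
    (hZ₂ : ∀ r ∈ Ioc 0 r₀, HasDerivWithinAt Z₂ ((ψ r / 2 - a / r) * Z₂ r + F r) (Ioc 0 r₀) r)
    (hb₁ : IsBoundedUnder (· ≤ ·) (𝓝[>] 0) (norm ∘ Z₁))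
    (hb₂ : IsBoundedUnder (· ≤ ·) (𝓝[>] 0) (norm ∘ Z₂)) :
    EqOn Z₁ Z₂ (Ioc 0 r₀) := by
  set μ := integratingFactor a ψ
  set D : ℝ → ℝ := fun u => μ u * Z₁ u - μ u * Z₂ u
  have hD' : ∀ r ∈ Ioc 0 r₀, HasDerivWithinAt D 0 (Ioc 0 r₀) r := fun r hr => by
    have hμ := hasDerivWithinAt_integratingFactor (a := a) hψ hr
    have h₁ := hμ.mul_integratingFactor (by rw [neg_sub]; exact hZ₁ r hr)
    have h₂ := hμ.mul_integratingFactor (by rw [neg_sub]; exact hZ₂ r hr)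
    simpa using h₁.fun_sub h₂
  have hμ0 := tendsto_integratingFactor_nhdsGT_zero ha hr₀ hψ
  have hD0 : Tendsto D (𝓝[>] 0) (𝓝 0) := by
    simpa using (hμ0.zero_mul_isBoundedUnder_le hb₁).sub (hμ0.zero_mul_isBoundedUnder_le hb₂)
  intro r hr
  have hDr : D r = 0 := by
    refine tendsto_const_nhds_iff.1 (hD0.congr' ?_)
    filter_upwards [Ioc_mem_nhdsGT hr₀] with t ht
    exact (convex_Ioc 0 r₀).eq_of_hasDerivWithinAt_zero hD' ht hr
  exact mul_left_cancel₀ (integratingFactor_pos hr.1).ne' (sub_eq_zero.1 hDr)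

end Uniqueness

theorem stmt3_general (n : ℕ) (hn : 2 ≤ n) (r₀ : ℝ) (hr₀ : 0 < r₀)
    (ψ F : ℝ → ℝ)
    (hψc : ContinuousOn ψ (Icc 0 r₀)) (hFc : ContinuousOn F (Icc 0 r₀))
    (CF : ℝ)
    (hF : ∀ r ∈ Ioc (0:ℝ) r₀, |F r| ≤ CF * r ^ 3)
    (Y : ℝ → ℝ)
    (hY : ∀ r ∈ Ioc (0:ℝ) r₀, Y r =
      r ^ (-(((n:ℝ) - 1)/2)) * Real.exp ((1/2) * ∫ ρ in (0:ℝ)..r, ψ ρ) *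
        ∫ ρ in (0:ℝ)..r,
          ρ ^ (((n:ℝ) - 1)/2) * Real.exp (-(1/2) * ∫ χ in (0:ℝ)..ρ, ψ χ) * F ρ) :
    Filter.Tendsto Y (nhdsWithin 0 (Ioi 0)) (nhds 0) ∧
    (∀ r ∈ Ioc (0:ℝ) r₀,
      HasDerivWithinAt Y ((ψ r / 2 - ((n:ℝ) - 1)/(2*r)) * Y r + F r) (Ioc 0 r₀) r) ∧
    (∀ Z : ℝ → ℝ,
      ((∀ r ∈ Ioc (0:ℝ) r₀,
          HasDerivWithinAt Z ((ψ r / 2 - ((n:ℝ) - 1)/(2*r)) * Z r + F r) (Ioc 0 r₀) r) ∧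
        ∃ B, ∀ r ∈ Ioc (0:ℝ) r₀, |Z r| ≤ B) →
      ∀ r ∈ Ioc (0:ℝ) r₀, Z r = Y r) ∧
    (∃ C, ∀ r ∈ Ioc (0:ℝ) r₀, |Y r| ≤ C * r ^ 4) := by
  have ha : 0 < ((n:ℝ) - 1) / 2 := by
    have : (2:ℝ) ≤ n := by exact_mod_cast hn
    linarith
  have hYeq : EqOn Y (integralSolution (((n:ℝ) - 1) / 2) ψ F) (Ioc 0 r₀) := fun r hr => by
    rw [hY r hr, ← inv_integratingFactor hr.1.le, inv_mul_eq_div]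
    rfl
  simp only [← div_div]
  obtain ⟨C, hC⟩ := abs_integralSolution_le ha.le hψc hFc hF
  have hYC : ∀ r ∈ Ioc 0 r₀, |Y r| ≤ C * r ^ 4 := fun r hr => hYeq hr ▸ hC r hr
  have hYlim : Tendsto Y (𝓝[>] 0) (𝓝 0) :=
    tendsto_nhdsGT_zero_of_abs_le_mul_rpow hr₀ four_pos fun r hr => by
      simpa only [Real.rpow_ofNat] using hYC r hr
  have hYode : ∀ r ∈ Ioc 0 r₀, HasDerivWithinAt Y
      ((ψ r / 2 - ((n:ℝ) - 1) / 2 / r) * Y r + F r) (Ioc 0 r₀) r := fun r hr => by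
    rw [hYeq hr]
    exact (hasDerivWithinAt_integralSolution ha.le hψc hFc hr).congr hYeq (hYeq hr)
  refine ⟨hYlim, hYode, fun Z ⟨hZ, B, hB⟩ r hr => ?_, C, hYC⟩
  have hZb : IsBoundedUnder (· ≤ ·) (𝓝[>] 0) (norm ∘ Z) := isBoundedUnder_of_eventually_le
    (a := B) (by filter_upwards [Ioc_mem_nhdsGT hr₀] with t ht using hB t ht)
  exact eqOn_of_isBoundedUnder_of_hasDerivWithinAt ha hr₀ hψc hZ hYode hZb
    hYlim.norm.isBoundedUnder_le hr

/-- The explicit integration formula for Y gives the unique bounded-at-0 solution of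
Y′ = (ψ/2 − (n−1)/(2r))Y + F, extends continuously by Y(0)=0, and Y = O(r⁴). -/
theorem stmt3 (n : ℕ) (hn : 2 ≤ n) (r₀ : ℝ) (hr₀ : 0 < r₀)
    (ψ F : ℝ → ℝ)
    (hψc : ContinuousOn ψ (Icc 0 r₀)) (hFc : ContinuousOn F (Icc 0 r₀))
    (Cψ CF : ℝ)
    (hψ : ∀ r ∈ Ioc (0:ℝ) r₀, |ψ r| ≤ Cψ * r ^ 3)
    (hF : ∀ r ∈ Ioc (0:ℝ) r₀, |F r| ≤ CF * r ^ 3)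
    (Y : ℝ → ℝ)
    (hY : ∀ r ∈ Ioc (0:ℝ) r₀, Y r =
      r ^ (-(((n:ℝ) - 1)/2)) * Real.exp ((1/2) * ∫ ρ in (0:ℝ)..r, ψ ρ) *
        ∫ ρ in (0:ℝ)..r,
          ρ ^ (((n:ℝ) - 1)/2) * Real.exp (-(1/2) * ∫ χ in (0:ℝ)..ρ, ψ χ) * F ρ) :
    Filter.Tendsto Y (nhdsWithin 0 (Ioi 0)) (nhds 0) ∧
    (∀ r ∈ Ioc (0:ℝ) r₀,
      HasDerivWithinAt Y ((ψ r / 2 - ((n:ℝ) - 1)/(2*r)) * Y r + F r) (Ioc 0 r₀) r) ∧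
    (∀ Z : ℝ → ℝ,
      ((∀ r ∈ Ioc (0:ℝ) r₀,
          HasDerivWithinAt Z ((ψ r / 2 - ((n:ℝ) - 1)/(2*r)) * Z r + F r) (Ioc 0 r₀) r) ∧
        ∃ B, ∀ r ∈ Ioc (0:ℝ) r₀, |Z r| ≤ B) →
      ∀ r ∈ Ioc (0:ℝ) r₀, Z r = Y r) ∧
    (∃ C, ∀ r ∈ Ioc (0:ℝ) r₀, |Y r| ≤ C * r ^ 4) :=
  stmt3_general n hn r₀ hr₀ ψ F hψc hFc CF hF Y hY
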